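/- arXiv:1711.08453 — 6 statements merged into one kernel-verified Lean document; each statement's English description precedes it below -/
import Mathlib

section
/- Fix n ≥ 2 and a scalar δ. For 1 ≤ k < n, let E_k^{(δ)} ∈ ℝ^{n×n} be the block-diagonal matrix diag(I_{k-1}, Ẽ) where Ẽ ∈ ℝ^{(n-k+1)×(n-k+1)} is lower bidiagonal with Ẽ_{00} = 1, Ẽ_{ii} = δ for i ≥ 1, and Ẽ_{i,i-1} = δ for i ≥ 1, all other entries zero. Then D^{(δ)} P_n = E_{n-1}^{(δ)} E_{n-2}^{(δ)} ⋯ E_2^{(δ)} E_1^{(δ)}. -/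
/-- The `n × n` lower-triangular Pascal matrix: `(P_n)_{ij} = C(i, j)` for `j ≤ i`, else `0`. -/
def pascalL (n : ℕ) : Matrix (Fin n) (Fin n) ℝ :=
  Matrix.of fun i j => if (j : ℕ) ≤ (i : ℕ) then ((i : ℕ).choose (j : ℕ) : ℝ) else 0

/-- The `n × n` block-diagonal matrix `E_k^{(δ)} = diag(I_{k-1}, Ẽ)` where `Ẽ` is lower
bidiagonal with `Ẽ_{00} = 1`, `Ẽ_{ii} = δ` and `Ẽ_{i,i-1} = δ` for `i ≥ 1`.
Concretely (zero-indexed): rows `i < k` agree with the identity, and rows `i ≥ k` have the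
entry `δ` in columns `i - 1` and `i`. -/
def Ekmat (n k : ℕ) (δ : ℝ) : Matrix (Fin n) (Fin n) ℝ :=
  Matrix.of fun i j =>
    if (i : ℕ) < k then (if (i : ℕ) = (j : ℕ) then 1 else 0)
    else if (j : ℕ) = (i : ℕ) ∨ (j : ℕ) + 1 = (i : ℕ) then δ else 0

/-- closed form of the suffix product `E_t ⋯ E_1`. -/
def Smat (n t : ℕ) (δ : ℝ) : Matrix (Fin n) (Fin n) ℝ :=
  Matrix.of fun i j =>
    if (i : ℕ) ≤ t then
      (if (j : ℕ) ≤ (i : ℕ) then δ ^ (i : ℕ) * ((i : ℕ).choose (j : ℕ) : ℝ) else 0)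
    else
      (if (i : ℕ) - t ≤ (j : ℕ) ∧ (j : ℕ) ≤ (i : ℕ) then
        δ ^ t * (Nat.choose t ((j : ℕ) - ((i : ℕ) - t)) : ℝ) else 0)

lemma Smat_zero (n : ℕ) (δ : ℝ) : Smat n 0 δ = 1 := by
  ext i j
  simp only [Smat, Matrix.of_apply, Matrix.one_apply, Fin.ext_iff, Nat.le_zero, Nat.sub_zero]
  split_ifs with h1 h2 h3 h4 h5 h6 <;> first
    | (exfalso; omega)
    | simp_all
    | (rw [h1]; norm_num)
    | (have : (j : ℕ) = (i : ℕ) := by omega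
       rw [← this, Nat.sub_self]; norm_num; omega)

lemma Ek_mul_apply_lt (n k : ℕ) (δ : ℝ) (M : Matrix (Fin n) (Fin n) ℝ) (i j : Fin n)
    (hi : (i : ℕ) < k) : (Ekmat n k δ * M) i j = M i j := by
  rw [Matrix.mul_apply, Finset.sum_eq_single i]
  · simp [Ekmat, hi]
  · intro b _ hb
    have : (i : ℕ) ≠ (b : ℕ) := fun hc => hb (Fin.ext hc).symm
    simp [Ekmat, hi, this]
  · simp

lemma Ek_mul_apply_ge (n k : ℕ) (δ : ℝ) (M : Matrix (Fin n) (Fin n) ℝ) (i i' j : Fin n)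
    (hk : 1 ≤ k) (hi : k ≤ (i : ℕ)) (hi' : (i' : ℕ) + 1 = (i : ℕ)) :
    (Ekmat n k δ * M) i j = δ * M i' j + δ * M i j := by
  have hne : i' ≠ i := by
    intro hc; rw [hc] at hi'; omega
  rw [Matrix.mul_apply]
  rw [(Finset.sum_subset (Finset.subset_univ ({i', i} : Finset (Fin n))) ?_).symm,
    Finset.sum_pair hne]
  · have e1 : Ekmat n k δ i i' = δ := by
      simp only [Ekmat, Matrix.of_apply, if_neg (by omega : ¬ (i : ℕ) < k)]
      rw [if_pos (Or.inr hi')]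
    have e2 : Ekmat n k δ i i = δ := by
      simp only [Ekmat, Matrix.of_apply, if_neg (by omega : ¬ (i : ℕ) < k)]
      simp
    rw [e1, e2]
  · intro c _ hc
    simp only [Finset.mem_insert, Finset.mem_singleton, not_or] at hc
    have hc1 : (c : ℕ) ≠ (i' : ℕ) := fun h => hc.1 (Fin.ext h)
    have hc2 : (c : ℕ) ≠ (i : ℕ) := fun h => hc.2 (Fin.ext h)
    simp only [Ekmat, Matrix.of_apply, if_neg (by omega : ¬ (i : ℕ) < k)]
    rw [if_neg (by omega)]
    ring

lemma Ek_mul_Smat (n m : ℕ) (δ : ℝ) :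
    Ekmat n (m + 1) δ * Smat n m δ = Smat n (m + 1) δ := by
  ext i j
  by_cases hi : (i : ℕ) < m + 1
  · rw [Ek_mul_apply_lt _ _ _ _ _ _ hi]
    simp only [Smat, Matrix.of_apply, if_pos (by omega : (i:ℕ) ≤ m + 1),
      if_pos (by omega : (i:ℕ) ≤ m)]
  · push_neg at hi
    have hipos : 1 ≤ (i : ℕ) := by omega
    obtain ⟨i', hi'⟩ : ∃ i' : Fin n, (i' : ℕ) + 1 = (i : ℕ) :=
      ⟨⟨(i : ℕ) - 1, lt_of_le_of_lt (Nat.sub_le _ _) i.2⟩, by simp; omega⟩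
    rw [Ek_mul_apply_ge _ _ _ _ _ i' _ (by omega) hi hi']
    simp only [Smat, Matrix.of_apply]
    rcases Nat.lt_or_ge (m + 1) (i : ℕ) with hi2 | hi2
    · -- i ≥ m + 2 : all three in second branch
      rw [if_neg (by omega : ¬ (i' : ℕ) ≤ m), if_neg (by omega : ¬ (i : ℕ) ≤ m),
        if_neg (by omega : ¬ (i : ℕ) ≤ m + 1)]
      split_ifs with h1 h2 h3 h4 h5 h6 <;> try (exfalso; omega)
      · -- middle region: a+1 ≤ j ≤ i-1
        have e1 : (j : ℕ) - ((i' : ℕ) - m) = ((j : ℕ) - ((i : ℕ) - m)) + 1 := by omega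
        have e2 : (j : ℕ) - ((i : ℕ) - (m + 1)) = ((j : ℕ) - ((i : ℕ) - m)) + 1 := by omega
        rw [e1, e2, Nat.choose_succ_succ']
        push_cast; ring
      · -- j = i - (m+1)
        have e1 : (j : ℕ) - ((i' : ℕ) - m) = 0 := by omega
        have e2 : (j : ℕ) - ((i : ℕ) - (m + 1)) = 0 := by omega
        rw [e1, e2]
        simp [pow_succ]; ring
      · -- j = i
        have e1 : (j : ℕ) - ((i : ℕ) - m) = m := by omega
        have e2 : (j : ℕ) - ((i : ℕ) - (m + 1)) = m + 1 := by omega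
        rw [e1, e2, Nat.choose_self, Nat.choose_self]
        simp [pow_succ]; ring
      · ring
    · -- i = m + 1
      have hieq : (i : ℕ) = m + 1 := by omega
      have hieq' : (i' : ℕ) = m := by omega
      rw [if_pos (by omega : (i' : ℕ) ≤ m), if_neg (by omega : ¬ (i : ℕ) ≤ m),
        if_pos (by omega : (i : ℕ) ≤ m + 1)]
      rw [hieq', hieq]
      split_ifs with h1 h2 h3 h4 h5 h6 <;> try (exfalso; omega)
      · -- 1 ≤ j ≤ m
        obtain ⟨jj, hjj⟩ : ∃ jj, (j : ℕ) = jj + 1 := ⟨(j : ℕ) - 1, by omega⟩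
        have e0 : m + 1 - m = 1 := by omega
        rw [e0, hjj, Nat.add_sub_cancel, Nat.choose_succ_succ' m jj]
        push_cast; ring
      · -- j = 0
        have hj0 : (j : ℕ) = 0 := by omega
        rw [hj0]
        simp [pow_succ]; ring
      · -- j = m + 1
        have e0 : m + 1 - m = 1 := by omega
        have e2 : (j : ℕ) = m + 1 := by omega
        rw [e0, e2, Nat.add_sub_cancel, Nat.choose_self, Nat.choose_self]
        simp [pow_succ]; ring
      · ring

lemma prod_eq_Smat (n : ℕ) (δ : ℝ) (m : ℕ) :
    (((List.range m).map fun ℓ => Ekmat n (m - ℓ) δ)).prod = Smat n m δ := by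
  induction m with
  | zero => simp [Smat_zero]
  | succ m ih =>
    rw [List.range_succ_eq_map, List.map_cons, List.map_map, List.prod_cons]
    have : ((fun ℓ => Ekmat n (m + 1 - ℓ) δ) ∘ Nat.succ) = fun ℓ => Ekmat n (m - ℓ) δ := by
      funext ℓ
      simp only [Function.comp_apply, Nat.succ_sub_succ]
    rw [this, ih, Nat.sub_zero, Ek_mul_Smat]

/-- `D^{(δ)} P_n = E_{n-1}^{(δ)} E_{n-2}^{(δ)} ⋯ E_2^{(δ)} E_1^{(δ)}`. -/
theorem pascal_E_factorization (n : ℕ) (hn : 2 ≤ n) (δ : ℝ) :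
    Matrix.diagonal (fun k : Fin n => δ ^ (k : ℕ)) * pascalL n =
      (((List.range (n - 1)).map fun ℓ => Ekmat n (n - 1 - ℓ) δ)).prod := by
  rw [prod_eq_Smat]
  ext i j
  have hi : (i : ℕ) ≤ n - 1 := by omega
  rw [Matrix.diagonal_mul]
  simp only [Smat, pascalL, Matrix.of_apply, if_pos hi]
  split <;> simp
end

section
/- Fix n ≥ 2 and a scalar δ. For 1 ≤ k < n, let F_k^{(δ)} ∈ ℝ^{n×n} be the block-diagonal matrix diag(I_{k-1}, F̃) where F̃ ∈ ℝ^{(n-k+1)×(n-k+1)} is lower bidiagonal with F̃_{00} = 1, F̃_{ii} = δ for i ≥ 1, and F̃_{i,i-1} = 1 for i ≥ 1, all other entries zero. Then P_n D^{(δ)} = F_{n-1}^{(δ)} F_{n-2}^{(δ)} ⋯ F_2^{(δ)} F_1^{(δ)}. -/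
/-- The `n × n` block-diagonal matrix `F_k^{(δ)} = diag(I_{k-1}, F̃)` where `F̃` is lower
bidiagonal with `F̃_{00} = 1`, `F̃_{ii} = δ` and `F̃_{i,i-1} = 1` for `i ≥ 1`.
Concretely (zero-indexed): rows `i < k` agree with the identity, and rows `i ≥ k` have the
entry `δ` in column `i` and the entry `1` in column `i - 1`. -/
def Fkmat (n k : ℕ) (δ : ℝ) : Matrix (Fin n) (Fin n) ℝ :=
  Matrix.of fun i j =>
    if (i : ℕ) < k then (if (i : ℕ) = (j : ℕ) then 1 else 0)
    else if (j : ℕ) = (i : ℕ) then δ else if (j : ℕ) + 1 = (i : ℕ) then 1 else 0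

/-- Closed form of the partial product `F_m F_{m-1} ⋯ F_1`. -/
def Hmat (n m : ℕ) (δ : ℝ) : Matrix (Fin n) (Fin n) ℝ :=
  Matrix.of fun i j =>
    if (i : ℕ) ≤ m then
      (if (j : ℕ) ≤ (i : ℕ) then ((i : ℕ).choose (j : ℕ) : ℝ) * δ ^ (j : ℕ) else 0)
    else
      (if (i : ℕ) - m ≤ (j : ℕ) ∧ (j : ℕ) ≤ (i : ℕ) then
        (m.choose ((j : ℕ) - ((i : ℕ) - m)) : ℝ) * δ ^ ((j : ℕ) - ((i : ℕ) - m)) else 0)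

lemma Hmat_zero (n : ℕ) (δ : ℝ) : Hmat n 0 δ = 1 := by
  ext i j
  simp only [Hmat, Matrix.of_apply, Matrix.one_apply, Nat.sub_zero, Nat.le_zero]
  rcases Nat.eq_zero_or_pos (i : ℕ) with h | h
  · rw [if_pos h]
    by_cases hj : (j : ℕ) ≤ (i : ℕ)
    · have hj0 : (j : ℕ) = 0 := by omega
      have hij : i = j := by apply Fin.ext; omega
      simp [hj, hj0, h, hij]
    · have hij : i ≠ j := by intro e; exact hj (by rw [e])
      simp [hj, hij]
  · rw [if_neg (by omega)]
    by_cases hij : i = j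
    · subst hij
      rw [if_pos ⟨le_rfl, le_rfl⟩]
      simp
    · have hc : ¬((i : ℕ) ≤ (j : ℕ) ∧ (j : ℕ) ≤ (i : ℕ)) := by
        intro ⟨h1, h2⟩
        exact hij (Fin.ext (le_antisymm h1 h2))
      rw [if_neg hc, if_neg hij]

/-- Unified closed form for rows at or below the diagonal block. -/
lemma Hform (b I J : ℕ) (δ : ℝ) (h : b ≤ I) :
    (if I ≤ b then (if J ≤ I then ((I.choose J : ℕ) : ℝ) * δ ^ J else 0)
     else if I - b ≤ J ∧ J ≤ I then ((b.choose (J - (I - b)) : ℕ) : ℝ) * δ ^ (J - (I - b))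
     else 0)
    = if I - b ≤ J ∧ J ≤ I then ((b.choose (J - (I - b)) : ℕ) : ℝ) * δ ^ (J - (I - b))
      else 0 := by
  rcases eq_or_lt_of_le h with hE | hL
  · subst hE
    rw [if_pos le_rfl]
    simp [Nat.sub_self]
  · rw [if_neg (by omega)]

lemma key (n m : ℕ) (δ : ℝ) :
    Fkmat n (m + 1) δ * Hmat n m δ = Hmat n (m + 1) δ := by
  ext i j
  rw [Matrix.mul_apply]
  by_cases hi : (i : ℕ) < m + 1
  · -- identity row
    have hFrow : ∀ k : Fin n, Fkmat n (m + 1) δ i k = if i = k then 1 else 0 := by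
      intro k
      simp only [Fkmat, Matrix.of_apply, if_pos hi]
      by_cases h : i = k
      · simp [h]
      · have hv : (i : ℕ) ≠ (k : ℕ) := fun e => h (Fin.ext e)
        simp [h, hv]
    calc (∑ k, Fkmat n (m + 1) δ i k * Hmat n m δ k j)
        = ∑ k, (if i = k then 1 else 0) * Hmat n m δ k j :=
          Finset.sum_congr rfl fun k _ => by rw [hFrow k]
      _ = Hmat n m δ i j := by simp
      _ = Hmat n (m + 1) δ i j := by
          simp only [Hmat, Matrix.of_apply]
          rw [if_pos (by omega : (i : ℕ) ≤ m), if_pos (by omega : (i : ℕ) ≤ m + 1)]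
  · -- shifted row: i ≥ m + 1
    have hi1 : m + 1 ≤ (i : ℕ) := by omega
    let i' : Fin n := ⟨(i : ℕ) - 1, lt_of_le_of_lt (Nat.sub_le _ _) i.isLt⟩
    have hval : (i' : ℕ) = (i : ℕ) - 1 := rfl
    have hne : i' ≠ i := by
      intro e
      have : (i : ℕ) - 1 = (i : ℕ) := congrArg Fin.val e
      omega
    have hFrow : ∀ k : Fin n, Fkmat n (m + 1) δ i k =
        (if k = i then δ else 0) + (if k = i' then 1 else 0) := by
      intro k
      simp only [Fkmat, Matrix.of_apply, if_neg hi]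
      by_cases h1 : k = i
      · subst h1
        rw [if_pos rfl, if_pos rfl, if_neg (Ne.symm hne)]
        ring
      · have hv1 : (k : ℕ) ≠ (i : ℕ) := fun e => h1 (Fin.ext e)
        rw [if_neg hv1, if_neg h1]
        by_cases h2 : k = i'
        · subst h2
          rw [if_pos (by rw [hval]; omega), if_pos rfl]
          ring
        · have hv2 : (k : ℕ) + 1 ≠ (i : ℕ) := by
            intro e
            exact h2 (Fin.ext (by rw [hval]; omega))
          rw [if_neg hv2, if_neg h2]
          ring
    have hsum : (∑ k, Fkmat n (m + 1) δ i k * Hmat n m δ k j)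
        = δ * Hmat n m δ i j + Hmat n m δ i' j := by
      calc (∑ k, Fkmat n (m + 1) δ i k * Hmat n m δ k j)
          = ∑ k, ((if k = i then δ * Hmat n m δ k j else 0)
              + (if k = i' then Hmat n m δ k j else 0)) := by
            refine Finset.sum_congr rfl fun k _ => ?_
            rw [hFrow k]
            by_cases h1 : k = i <;> by_cases h2 : k = i' <;>
              simp [h1, h2, hne, Ne.symm hne]
        _ = δ * Hmat n m δ i j + Hmat n m δ i' j := by
            rw [Finset.sum_add_distrib, Finset.sum_ite_eq', Finset.sum_ite_eq']
            simp
    rw [hsum]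
    simp only [Hmat, Matrix.of_apply, hval]
    obtain ⟨a, ha⟩ : ∃ a, (i : ℕ) = m + 1 + a := ⟨(i : ℕ) - (m + 1), by omega⟩
    set J := (j : ℕ) with hJ
    rw [if_neg (by omega : ¬ (i : ℕ) ≤ m)]
    rw [show ((if (i : ℕ) - 1 ≤ m then
          (if J ≤ (i : ℕ) - 1 then ((((i : ℕ) - 1).choose J : ℕ) : ℝ) * δ ^ J else 0)
        else if (i : ℕ) - 1 - m ≤ J ∧ J ≤ (i : ℕ) - 1 then
          ((m.choose (J - ((i : ℕ) - 1 - m)) : ℕ) : ℝ) * δ ^ (J - ((i : ℕ) - 1 - m))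
        else 0) : ℝ)
        = if (i : ℕ) - 1 - m ≤ J ∧ J ≤ (i : ℕ) - 1 then
            ((m.choose (J - ((i : ℕ) - 1 - m)) : ℕ) : ℝ) * δ ^ (J - ((i : ℕ) - 1 - m))
          else 0 from Hform m ((i : ℕ) - 1) J δ (by omega)]
    rw [show ((if (i : ℕ) ≤ m + 1 then
          (if J ≤ (i : ℕ) then (((i : ℕ).choose J : ℕ) : ℝ) * δ ^ J else 0)
        else if (i : ℕ) - (m + 1) ≤ J ∧ J ≤ (i : ℕ) then
          (((m + 1).choose (J - ((i : ℕ) - (m + 1))) : ℕ) : ℝ)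
            * δ ^ (J - ((i : ℕ) - (m + 1)))
        else 0) : ℝ)
        = if (i : ℕ) - (m + 1) ≤ J ∧ J ≤ (i : ℕ) then
            (((m + 1).choose (J - ((i : ℕ) - (m + 1))) : ℕ) : ℝ)
              * δ ^ (J - ((i : ℕ) - (m + 1)))
          else 0 from Hform (m + 1) (i : ℕ) J δ (by omega)]
    rw [ha]
    have e1 : m + 1 + a - m = a + 1 := by omega
    have e2 : m + 1 + a - 1 - m = a := by omega
    have e3 : m + 1 + a - 1 = m + a := by omega
    have e4 : m + 1 + a - (m + 1) = a := by omega
    rw [e1, e2, e3, e4]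
    rcases lt_or_ge J a with h1 | h1
    · rw [if_neg (by omega), if_neg (by omega), if_neg (by omega)]
      ring
    · rcases eq_or_lt_of_le h1 with h2 | h2
      · -- J = a
        rw [if_neg (by omega), if_pos (by omega), if_pos (by omega)]
        rw [show J - a = 0 by omega]
        simp
      · rcases le_or_gt J (m + a) with h3 | h3
        · -- a + 1 ≤ J ≤ m + a
          obtain ⟨s, hs⟩ : ∃ s, J = a + 1 + s := ⟨J - (a + 1), by omega⟩
          rw [if_pos (by omega), if_pos (by omega), if_pos (by omega)]
          rw [show J - (a + 1) = s by omega, show J - a = s + 1 by omega]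
          rw [Nat.choose_succ_succ]
          push_cast
          rw [pow_succ]
          ring
        · rcases eq_or_lt_of_le (show m + 1 + a ≤ J by omega) with h4 | h4
          · -- J = m + 1 + a
            rw [if_pos (by omega), if_neg (by omega), if_pos (by omega)]
            rw [show J - (a + 1) = m by omega, show J - a = m + 1 by omega]
            simp [Nat.choose_self, pow_succ]
            ring
          · -- J > m + 1 + a
            rw [if_neg (by omega), if_neg (by omega), if_neg (by omega)]
            ring

lemma prod_eq (n : ℕ) (δ : ℝ) (m : ℕ) :
    ((List.range m).map fun ℓ => Fkmat n (m - ℓ) δ).prod = Hmat n m δ := by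
  induction m with
  | zero => simpa using (Hmat_zero n δ).symm
  | succ m ih =>
      rw [List.range_succ_eq_map, List.map_cons, List.map_map, List.prod_cons]
      have hmap : (List.range m).map ((fun ℓ => Fkmat n (m + 1 - ℓ) δ) ∘ Nat.succ)
          = (List.range m).map (fun ℓ => Fkmat n (m - ℓ) δ) := by
        apply List.map_congr_left
        intro ℓ _
        have he : m + 1 - Nat.succ ℓ = m - ℓ := by omega
        simp [Function.comp, he]
      rw [hmap, ih, Nat.sub_zero]
      exact key n m δ

/-- `P_n D^{(δ)} = F_{n-1}^{(δ)} F_{n-2}^{(δ)} ⋯ F_2^{(δ)} F_1^{(δ)}`. -/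
theorem pascal_F_factorization (n : ℕ) (hn : 2 ≤ n) (δ : ℝ) :
    pascalL n * Matrix.diagonal (fun k : Fin n => δ ^ (k : ℕ)) =
      (((List.range (n - 1)).map fun ℓ => Fkmat n (n - 1 - ℓ) δ)).prod := by
  rw [prod_eq]
  ext i j
  rw [Matrix.mul_diagonal]
  simp only [pascalL, Hmat, Matrix.of_apply]
  rw [if_pos (by omega : (i : ℕ) ≤ n - 1)]
  by_cases h : (j : ℕ) ≤ (i : ℕ) <;> simp [h]
end

section
/- Let n ≥ 2, let Q = Q_n be the n × n ℓ∞-normalized lower-triangular Pascal matrix, W = W_n the diagonal sign matrix, and for 1 ≤ k < n let F_k^{(2)} ∈ ℝ^{n×n} be the block-diagonal matrix diag(I_{k-1}, F̃) where F̃ is lower bidiagonal with F̃_{00} = 1, F̃_{ii} = 2 for i ≥ 1, and F̃_{i,i-1} = 1 for i ≥ 1. Then Q⁻¹ = W F_{n-1}^{(2)} F_{n-2}^{(2)} ⋯ F_1^{(2)} W. -/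
/-- The `ℓ∞`-normalized lower-triangular Pascal matrix:
`(Q_n)_{ij} = 2^{-i} C(i, j)` for `j ≤ i`, else `0`. -/
noncomputable def Qmat (n : ℕ) : Matrix (Fin n) (Fin n) ℝ :=
  Matrix.of fun i j =>
    if (j : ℕ) ≤ (i : ℕ) then ((2 : ℝ) ^ (i : ℕ))⁻¹ * ((i : ℕ).choose (j : ℕ) : ℝ) else 0

/-- The `n × n` diagonal sign matrix `W_n = diag((-1)^k)`. -/
def Wmat (n : ℕ) : Matrix (Fin n) (Fin n) ℝ :=
  Matrix.diagonal fun k => (-1 : ℝ) ^ (k : ℕ)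

/-- The `n × n` block-diagonal matrix `F_k^{(2)} = diag(I_{k-1}, F̃)` where `F̃` is lower
bidiagonal with `F̃_{00} = 1`, `F̃_{ii} = 2` and `F̃_{i,i-1} = 1` for `i ≥ 1`.
Concretely (zero-indexed): rows `i < k` agree with the identity, and rows `i ≥ k` have the
entry `2` in column `i` and the entry `1` in column `i - 1`. -/
def Fk2mat (n k : ℕ) : Matrix (Fin n) (Fin n) ℝ :=
  Matrix.of fun i j =>
    if (i : ℕ) < k then (if (i : ℕ) = (j : ℕ) then 1 else 0)
    else if (j : ℕ) = (i : ℕ) then 2 else if (j : ℕ) + 1 = (i : ℕ) then 1 else 0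

/-! Read row `i` of a matrix `M` as the polynomial `∑ⱼ M i j Xʲ`. Left multiplication by `F_k`
replaces row `i ≥ k` by row `i - 1` plus twice row `i`, so the rows of `F_k ⋯ F_1` are
`X^(i-k) (1 + 2X)^min(i,k)`, which is `(1 + 2X)^i` for `k = n - 1`. Conjugating by `W` substitutes
`-X` and multiplies row `i` by `(-1)^i`, giving the rows `(2X - 1)^i`. Row `i` of `Q` times this
matrix is then `2^{-i} ∑ₗ C(i,l) (2X - 1)^l = 2^{-i} (2X)^i = X^i` by the binomial theorem. -/

open Polynomial

theorem sum_fin_choose_mul_pow {R : Type*} [CommSemiring R] {n i : ℕ} (hi : i < n) (x : R) :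
    ∑ l : Fin n, (i.choose l : R) * x ^ (l : ℕ) = (x + 1) ^ i := by
  rw [Fin.sum_univ_eq_sum_range (fun l => (i.choose l : R) * x ^ l) n,
    ← Finset.sum_subset (Finset.range_subset_range.2 hi) fun l _ hl => ?_, add_pow]
  · exact Finset.sum_congr rfl fun l _ => by rw [one_pow, mul_one, mul_comm]
  · rw [Finset.mem_range, not_lt] at hl
    rw [Nat.choose_eq_zero_of_lt hl, Nat.cast_zero, zero_mul]

section

variable {n : ℕ}

noncomputable def rowPoly {R : Type*} [Semiring R] (M : Matrix (Fin n) (Fin n) R) (i : Fin n) :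
    R[X] :=
  ∑ j, C (M i j) * X ^ (j : ℕ)

section Semiring

variable {R : Type*} [Semiring R]

theorem coeff_rowPoly (M : Matrix (Fin n) (Fin n) R) (i j : Fin n) :
    (rowPoly M i).coeff j = M i j := by
  simp only [rowPoly, finsetSum_coeff, coeff_C_mul_X_pow, Fin.val_inj]
  simp

theorem rowPoly_injective :
    Function.Injective (rowPoly : Matrix (Fin n) (Fin n) R → Fin n → R[X]) := by
  intro M N h
  ext i j
  rw [← coeff_rowPoly M, ← coeff_rowPoly N, h]

theorem rowPoly_one (i : Fin n) : rowPoly (1 : Matrix (Fin n) (Fin n) R) i = X ^ (i : ℕ) := by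
  simp [rowPoly, Matrix.one_apply]

theorem rowPoly_mul (A M : Matrix (Fin n) (Fin n) R) (i : Fin n) :
    rowPoly (A * M) i = ∑ l, C (A i l) * rowPoly M l := by
  simp only [rowPoly, Matrix.mul_apply, map_sum, Finset.sum_mul, Finset.mul_sum, C_mul, mul_assoc]
  exact Finset.sum_comm

end Semiring

theorem rowPoly_Wmat_mul (M : Matrix (Fin n) (Fin n) ℝ) (i : Fin n) :
    rowPoly (Wmat n * M) i = C ((-1) ^ (i : ℕ)) * rowPoly M i := by
  simp only [rowPoly, Wmat, Matrix.diagonal_mul, C_mul, Finset.mul_sum, mul_assoc]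

theorem rowPoly_mul_Wmat (M : Matrix (Fin n) (Fin n) ℝ) (i : Fin n) :
    rowPoly (M * Wmat n) i = (rowPoly M i).comp (-X) := by
  simp only [rowPoly, Wmat, Matrix.mul_diagonal, sum_comp, mul_comp, C_comp, X_pow_comp]
  refine Finset.sum_congr rfl fun j _ => ?_
  rw [C_mul, C_pow, C_neg, C_1, neg_pow (X : ℝ[X])]
  ring

theorem rowPoly_Fk2mat_mul {k : ℕ} (hk : 0 < k) (M : Matrix (Fin n) (Fin n) ℝ) (i : Fin n) :
    rowPoly (Fk2mat n k * M) i =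
      if (i : ℕ) < k then rowPoly M i
      else rowPoly M ⟨i - 1, (Nat.sub_le _ _).trans_lt i.isLt⟩ + 2 * rowPoly M i := by
  rw [rowPoly_mul]
  split_ifs with hik
  · rw [Fintype.sum_eq_single i fun l hl => ?_]
    · simp [Fk2mat, hik]
    · simp [Fk2mat, hik, Fin.val_ne_of_ne (Ne.symm hl)]
  · have hne : (⟨i - 1, (Nat.sub_le _ _).trans_lt i.isLt⟩ : Fin n) ≠ i := by
      rw [Ne, Fin.ext_iff]; dsimp only; omega
    rw [Fintype.sum_eq_add _ _ hne fun l hl => ?_]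
    · have hi : (i : ℕ) - 1 + 1 = i := by omega
      simp [Fk2mat, hik, hi, show (i : ℕ) - 1 ≠ i by omega, map_ofNat]
    · have h1 : (l : ℕ) ≠ i := fun h => hl.2 (Fin.ext h)
      have h2 : (l : ℕ) + 1 ≠ i := fun h => hl.1 (Fin.ext (by dsimp only; omega))
      simp [Fk2mat, hik, h1, h2]

def fk2Prod (n k : ℕ) : Matrix (Fin n) (Fin n) ℝ :=
  ((List.range k).map fun ℓ => Fk2mat n (k - ℓ)).prod

theorem fk2Prod_succ (k : ℕ) : fk2Prod n (k + 1) = Fk2mat n (k + 1) * fk2Prod n k := by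
  simp only [fk2Prod, List.range_succ_eq_map, List.map_cons, List.map_map, List.prod_cons,
    Nat.sub_zero, Function.comp_def, Nat.succ_sub_succ]

theorem rowPoly_fk2Prod (k : ℕ) (i : Fin n) :
    rowPoly (fk2Prod n k) i = X ^ ((i : ℕ) - k) * (1 + 2 * X) ^ min (i : ℕ) k := by
  induction k generalizing i with
  | zero => simp [fk2Prod, rowPoly_one]
  | succ k ih =>
    rw [fk2Prod_succ, rowPoly_Fk2mat_mul k.succ_pos]
    split_ifs with hik
    · rw [ih, min_eq_left (by omega), min_eq_left (by omega), Nat.sub_eq_zero_of_le (by omega),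
        Nat.sub_eq_zero_of_le (by omega)]
    · obtain ⟨m, hm⟩ : ∃ m, (i : ℕ) = m + k + 1 := ⟨i - (k + 1), by omega⟩
      simp only [ih, hm, Nat.add_sub_cancel, min_eq_right (by omega : k ≤ m + k),
        min_eq_right (by omega : k + 1 ≤ m + k + 1), min_eq_right (by omega : k ≤ m + k + 1)]
      rw [show m + k + 1 - (k + 1) = m by omega, show m + k + 1 - k = m + 1 by omega]
      ring

theorem Qmat_apply (i j : Fin n) :
    Qmat n i j = ((2 : ℝ) ^ (i : ℕ))⁻¹ * ((i : ℕ).choose j : ℝ) := by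
  rw [Qmat, Matrix.of_apply, ite_eq_left_iff]
  intro hij
  rw [Nat.choose_eq_zero_of_lt (by omega), Nat.cast_zero, mul_zero]

theorem rowPoly_Wmat_mul_fk2Prod_mul_Wmat (i : Fin n) :
    rowPoly (Wmat n * fk2Prod n (n - 1) * Wmat n) i = (2 * X - 1) ^ (i : ℕ) := by
  rw [rowPoly_mul_Wmat, rowPoly_Wmat_mul, rowPoly_fk2Prod, Nat.sub_eq_zero_of_le (by omega),
    min_eq_left (by omega)]
  simp only [pow_zero, one_mul, mul_comp, pow_comp, add_comp, neg_comp, one_comp, X_comp,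
    ofNat_comp, C_pow, C_neg, C_1, ← mul_pow]
  ring

theorem Qmat_mul_Wmat_mul_fk2Prod_mul_Wmat :
    Qmat n * (Wmat n * fk2Prod n (n - 1) * Wmat n) = 1 := by
  refine rowPoly_injective (funext fun i => ?_)
  rw [rowPoly_mul, rowPoly_one]
  simp_rw [rowPoly_Wmat_mul_fk2Prod_mul_Wmat, Qmat_apply, C_mul, mul_assoc, ← Finset.mul_sum,
    map_natCast C, sum_fin_choose_mul_pow i.isLt, sub_add_cancel]
  rw [mul_pow, ← mul_assoc, ← C_ofNat, ← C_pow, ← C_mul, inv_mul_cancel₀ (by positivity), C_1,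
    one_mul]

end

theorem normalized_pascal_inv_F_factorization_general (n : ℕ) :
    (Qmat n)⁻¹ =
      Wmat n * (((List.range (n - 1)).map fun ℓ => Fk2mat n (n - 1 - ℓ))).prod * Wmat n :=
  Matrix.inv_eq_right_inv Qmat_mul_Wmat_mul_fk2Prod_mul_Wmat

/-- `Q⁻¹ = W F_{n-1}^{(2)} F_{n-2}^{(2)} ⋯ F_1^{(2)} W`. -/
theorem normalized_pascal_inv_F_factorization (n : ℕ) (hn : 2 ≤ n) :
    (Qmat n)⁻¹ =
      Wmat n * (((List.range (n - 1)).map fun ℓ => Fk2mat n (n - 1 - ℓ))).prod * Wmat n :=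
  normalized_pascal_inv_F_factorization_general n
end

section
/- Fix n ∈ ℕ, k ∈ ℕ, and an integer partition n = n_1 + ⋯ + n_k with each n_i ≥ 1. Define c_0 = 0 and c_i = n_1 + ⋯ + n_i for i ≥ 1. For each i, let L_i ∈ ℝ^{n×n} be the block matrix with diagonal blocks I_{c_{i-1}} and M_i, where M_i ∈ ℝ^{(n-c_{i-1})×(n-c_{i-1})} has the ℓ∞-normalized Pascal matrix Q_{n_i} in its top-left n_i × n_i block, zeros in the remaining top rows, and the banded binomial convolution matrix B_{n-c_{i-1}, n_i} in its bottom n − c_i rows. Then Q_n = L_k L_{k-1} ⋯ L_2 L_1. -/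
/-- Entry `(i, j)` of the banded binomial convolution matrix `B_{·,m}`:
`(B)_{ij} = (b_m)_{j-i} = 2^{-m} C(m, j-i)` if `0 ≤ j - i ≤ m`, else `0`. -/
noncomputable def Bent (m i j : ℕ) : ℝ :=
  if i ≤ j ∧ j ≤ i + m then ((2 : ℝ) ^ m)⁻¹ * (m.choose (j - i) : ℝ) else 0

/-- The `n × n` block matrix `L` with diagonal blocks `I_{cprev}` and `M`, where
`M ∈ ℝ^{(n-cprev) × (n-cprev)}` has `Q_{ni}` in its top-left `ni × ni` block, zeros in the
remaining top rows, and the banded binomial convolution matrix `B_{n-cprev, ni}` in its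
bottom rows. -/
noncomputable def Lmat (n cprev ni : ℕ) : Matrix (Fin n) (Fin n) ℝ :=
  Matrix.of fun a b =>
    if (a : ℕ) < cprev ∨ (b : ℕ) < cprev then (if a = b then 1 else 0)
    else if (a : ℕ) - cprev < ni then
      (if (b : ℕ) - cprev ≤ (a : ℕ) - cprev then
        ((2 : ℝ) ^ ((a : ℕ) - cprev))⁻¹ * (((a : ℕ) - cprev).choose ((b : ℕ) - cprev) : ℝ)
      else 0)
    else Bent ni ((a : ℕ) - cprev - ni) ((b : ℕ) - cprev)

/-- `c_i = n_1 + ⋯ + n_i`, the partial sums of the partition `nf 1, nf 2, …`. -/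
def csum (nf : ℕ → ℕ) (i : ℕ) : ℕ := ∑ j ∈ Finset.range i, nf (j + 1)

open Finset

lemma Bent_of_le {m i j : ℕ} (h : i ≤ j) : Bent m i j = ((2 : ℝ) ^ m)⁻¹ * m.choose (j - i) := by
  unfold Bent
  split_ifs with hb
  · rfl
  · rw [Nat.choose_eq_zero_of_lt (by omega), Nat.cast_zero, mul_zero]

lemma Bent_of_lt {m i j : ℕ} (h : j < i) : Bent m i j = 0 :=
  if_neg (by omega)

lemma Bent_of_add_lt {m i j : ℕ} (h : i + m < j) : Bent m i j = 0 :=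
  if_neg (by omega)

lemma Bent_zero_left (i j : ℕ) : Bent 0 i j = if i = j then 1 else 0 := by
  by_cases hij : i = j
  · subst hij
    simp [Bent]
  · rw [if_neg hij]
    exact if_neg (by omega)

/-- Vandermonde's identity `b_r * b_c = b_{r+c}`, with the filter `b_r` placed at offset `t`. -/
lemma sum_Bent_mul_Bent {r t N : ℕ} (c b : ℕ) (h : t + r < N) :
    ∑ s ∈ range N, Bent r t s * Bent c s b = Bent (r + c) t b := by
  set F : ℕ → ℝ := fun s => Bent r t s * Bent c s b
  have hF_band : ∀ s ≥ N, F s = 0 := fun s hs => by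
    simp only [F, Bent_of_add_lt (show t + r < s by omega), zero_mul]
  have hF_col : ∀ s ≥ b + 1, F s = 0 := fun s hs => by
    simp only [F, Bent_of_lt (show b < s by omega), mul_zero]
  calc ∑ s ∈ range N, F s = ∑ s ∈ range (max N (b + 1)), F s :=
        (eventually_constant_sum hF_band (le_max_left _ _)).symm
    _ = ∑ s ∈ range (b + 1), F s := eventually_constant_sum hF_col (le_max_right _ _)
    _ = Bent (r + c) t b := ?_
  rcases lt_or_ge b t with hbt | htb
  · rw [Bent_of_lt hbt]
    refine sum_eq_zero fun s hs => ?_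
    simp only [F, Bent_of_lt (show s < t by simp at hs; omega), zero_mul]
  obtain ⟨d, rfl⟩ := Nat.exists_eq_add_of_le htb
  have hF_before : ∑ s ∈ range t, F s = 0 :=
    sum_eq_zero fun s hs => by simp only [F, Bent_of_lt (show s < t by simpa using hs), zero_mul]
  rw [show t + d + 1 = t + (d + 1) by ring, sum_range_add, hF_before, zero_add,
    Bent_of_le htb, Nat.add_sub_cancel_left, Nat.add_choose_eq,
    Nat.sum_antidiagonal_eq_sum_range_succ_mk, Nat.cast_sum, mul_sum]
  refine sum_congr rfl fun u hu => ?_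
  have hud : u ≤ d := by simpa [Nat.lt_succ_iff] using hu
  simp only [F, Bent_of_le (Nat.le_add_right t u), Bent_of_le (show t + u ≤ t + d by omega),
    Nat.add_sub_cancel_left, Nat.add_sub_add_left, pow_add, mul_inv, Nat.cast_mul]
  ring

/-- Equals `L_i ⋯ L_1` for `c = c_i`. -/
noncomputable def partialQmat (n c : ℕ) : Matrix (Fin n) (Fin n) ℝ :=
  Matrix.of fun a b => if (a : ℕ) < c then Bent a 0 b else Bent c (a - c) b

lemma Qmat_apply_s10 (n : ℕ) (a b : Fin n) : Qmat n a b = Bent a 0 b := by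
  simp [Qmat, Bent]

lemma partialQmat_zero (n : ℕ) : partialQmat n 0 = 1 := by
  ext a b
  simp [partialQmat, Bent_zero_left, Matrix.one_apply, Fin.val_inj]

lemma partialQmat_self (n : ℕ) : partialQmat n n = Qmat n := by
  ext a b
  simp [partialQmat, Qmat_apply_s10]

section Lmat

variable {n c m : ℕ} {a : Fin n}

lemma Lmat_apply_of_lt (ha : (a : ℕ) < c) (x : Fin n) : Lmat n c m a x = if a = x then 1 else 0 :=
  if_pos (Or.inl ha)

lemma Lmat_apply_of_lt_add (hca : c ≤ a) (ham : (a : ℕ) < c + m) (x : Fin n) :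
    Lmat n c m a x = if (x : ℕ) < c then 0 else Bent (a - c) 0 (x - c) := by
  by_cases hx : (x : ℕ) < c
  · simp [Lmat, hx, Fin.ext_iff]; omega
  · simp only [Lmat, Matrix.of_apply]
    rw [if_neg hx, if_neg (show ¬((a : ℕ) < c ∨ (x : ℕ) < c) by omega),
      if_pos (show (a : ℕ) - c < m by omega)]
    simp [Bent]

lemma Lmat_apply_of_add_le (hma : c + m ≤ a) (x : Fin n) :
    Lmat n c m a x = if (x : ℕ) < c then 0 else Bent m (a - c - m) (x - c) := by
  by_cases hx : (x : ℕ) < c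
  · simp [Lmat, hx, Fin.ext_iff]; omega
  · simp only [Lmat, Matrix.of_apply]
    rw [if_neg hx, if_neg (show ¬((a : ℕ) < c ∨ (x : ℕ) < c) by omega),
      if_neg (show ¬(a : ℕ) - c < m by omega)]

end Lmat

lemma sum_ite_Bent_mul_partialQmat {n c r t : ℕ} (h : c + t + r < n) (b : Fin n) :
    ∑ x : Fin n, (if (x : ℕ) < c then 0 else Bent r t (x - c)) * partialQmat n c x b =
      Bent (r + c) t b := by
  have hterm (x : Fin n) :
      (if (x : ℕ) < c then 0 else Bent r t (x - c)) * partialQmat n c x b =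
        if (x : ℕ) < c then 0 else Bent r t (x - c) * Bent c (x - c) b := by
    by_cases hx : (x : ℕ) < c <;> simp [partialQmat, hx]
  simp only [hterm]
  rw [Fin.sum_univ_eq_sum_range
      (fun x => if x < c then 0 else Bent r t (x - c) * Bent c (x - c) b),
    show range n = range (c + (n - c)) by rw [Nat.add_sub_cancel' (by omega)], sum_range_add,
    sum_eq_zero fun x hx => if_pos (mem_range.mp hx), zero_add]
  simp only [Nat.add_sub_cancel_left, add_lt_iff_neg_left, not_lt_zero, if_false]
  exact sum_Bent_mul_Bent c b (by omega)

lemma Lmat_mul_partialQmat {n c m : ℕ} (h : c + m ≤ n) :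
    Lmat n c m * partialQmat n c = partialQmat n (c + m) := by
  ext a b
  rw [Matrix.mul_apply]
  rcases lt_or_ge (a : ℕ) c with hac | hca
  · simp only [Lmat_apply_of_lt hac, ite_mul, one_mul, zero_mul, sum_ite_eq, mem_univ, if_true]
    simp [partialQmat, hac, show (a : ℕ) < c + m by omega]
  rcases lt_or_ge (a : ℕ) (c + m) with ham | hma
  · simp only [Lmat_apply_of_lt_add hca ham]
    rw [sum_ite_Bent_mul_partialQmat (by omega), Nat.sub_add_cancel hca]
    simp [partialQmat, ham]
  · simp only [Lmat_apply_of_add_le hma]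
    rw [sum_ite_Bent_mul_partialQmat (by omega), add_comm, Nat.sub_sub]
    simp [partialQmat, not_lt.mpr hma]

lemma csum_succ (nf : ℕ → ℕ) (k : ℕ) : csum nf (k + 1) = csum nf k + nf (k + 1) :=
  sum_range_succ _ _

lemma prod_Lmat_eq_partialQmat {n : ℕ} (nf : ℕ → ℕ) {k : ℕ} (hk : csum nf k ≤ n) :
    (((List.range k).reverse).map fun ℓ => Lmat n (csum nf ℓ) (nf (ℓ + 1))).prod =
      partialQmat n (csum nf k) := by
  induction k with
  | zero => simp [csum, partialQmat_zero]
  | succ k ih =>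
    rw [csum_succ] at hk ⊢
    rw [List.range_succ, List.reverse_append, List.map_append, List.prod_append,
      ih (by omega)]
    simpa using Lmat_mul_partialQmat hk

theorem normalized_pascal_L_factorization_general (n k : ℕ) (nf : ℕ → ℕ)
    (hsum : csum nf k = n) :
    Qmat n = (((List.range k).reverse).map fun ℓ => Lmat n (csum nf ℓ) (nf (ℓ + 1))).prod := by
  rw [prod_Lmat_eq_partialQmat nf hsum.le, hsum, partialQmat_self]

/-- Multiway recursive factorization: given a partition `n = n_1 + ⋯ + n_k` with each
`n_i ≥ 1`, we have `Q_n = L_k L_{k-1} ⋯ L_2 L_1`, where `L_i` is built from `Q_{n_i}` and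
`B_{n - c_{i-1}, n_i}`. -/
theorem normalized_pascal_L_factorization (n k : ℕ) (nf : ℕ → ℕ)
    (hpos : ∀ i, 1 ≤ i → i ≤ k → 1 ≤ nf i) (hsum : csum nf k = n) :
    Qmat n = (((List.range k).reverse).map fun ℓ => Lmat n (csum nf ℓ) (nf (ℓ + 1))).prod :=
  normalized_pascal_L_factorization_general n k nf hsum
end

section
/- Fix n ≥ 1 and t ∈ [0, 1]. For 1 ≤ k ≤ n, let G_k^{(t)} ∈ ℝ^{(n+1)×(n+1)} be the block-diagonal matrix diag(I_{k-1}, G̃) where G̃ ∈ ℝ^{(n+2-k)×(n+2-k)} is lower bidiagonal with G̃_{00} = 1, G̃_{ii} = t for i ≥ 1, and G̃_{i,i-1} = 1 − t for i ≥ 1, all other entries zero. Then the Bernstein matrix satisfies 𝓑_n^{(t)} = G_n^{(t)} G_{n-1}^{(t)} ⋯ G_1^{(t)}. -/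
/-- The `n`-th Bernstein matrix `𝓑_n^{(t)} ∈ ℝ^{(n+1)×(n+1)}`:
`(𝓑_n^{(t)})_{ij} = C(i, j) t^j (1-t)^{i-j}` for `j ≤ i`, else `0`. -/
def bernsteinMat (n : ℕ) (t : ℝ) : Matrix (Fin (n + 1)) (Fin (n + 1)) ℝ :=
  Matrix.of fun i j =>
    if (j : ℕ) ≤ (i : ℕ) then
      ((i : ℕ).choose (j : ℕ) : ℝ) * t ^ (j : ℕ) * (1 - t) ^ ((i : ℕ) - (j : ℕ))
    else 0

/-- The `(n+1) × (n+1)` block-diagonal matrix `G_k^{(t)} = diag(I_{k-1}, G̃)` where `G̃` is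
lower bidiagonal with `G̃_{00} = 1`, `G̃_{ii} = t` and `G̃_{i,i-1} = 1 - t` for `i ≥ 1`.
Concretely (zero-indexed): rows `i < k` agree with the identity, and rows `i ≥ k` have the
entry `t` in column `i` and the entry `1 - t` in column `i - 1`. -/
def Gmat (n k : ℕ) (t : ℝ) : Matrix (Fin (n + 1)) (Fin (n + 1)) ℝ :=
  Matrix.of fun i j =>
    if (i : ℕ) < k then (if (i : ℕ) = (j : ℕ) then 1 else 0)
    else if (j : ℕ) = (i : ℕ) then t else if (j : ℕ) + 1 = (i : ℕ) then 1 - t else 0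

/-!
Row `i` of the partial product `G_k ⋯ G_1` is the coefficient vector of
`X ^ (i - m) * (t X + (1 - t)) ^ m` with `m = min i k`. Multiplying by `G_{k+1}` replaces row
`i > k` by `t • row i + (1 - t) • row (i - 1)`, which multiplies that polynomial by `t X + (1 - t)`
and divides it by `X`. For `k = n` the polynomial is `(t X + (1 - t)) ^ i`, whose coefficients
form the `i`-th row of the Bernstein matrix by the binomial theorem.
-/

open Polynomial

theorem Polynomial.coeff_C_mul_X_add_C_pow {R : Type*} [CommSemiring R] (a b : R) (n k : ℕ) :
    ((C b * X + C a) ^ n).coeff k = n.choose k * b ^ k * a ^ (n - k) := by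
  rw [add_pow, finsetSum_coeff]
  simp_rw [mul_pow, ← C_pow, ← Nat.cast_comm, ← C_eq_natCast, mul_assoc, mul_comm (X ^ _),
    ← mul_assoc, ← C_mul, coeff_C_mul_X_pow]
  rw [Finset.sum_eq_single k]
  · exact if_pos rfl
  · exact fun m _ hm => if_neg (Ne.symm hm)
  · intro hk
    rw [Finset.mem_range, not_lt] at hk
    rw [if_pos rfl, Nat.choose_eq_zero_of_lt hk]
    simp

section deCasteljau

variable {R : Type*} [CommRing R]

noncomputable def deCasteljauRow (k i : ℕ) (t : R) : R[X] :=
  X ^ (i - min i k) * (C t * X + C (1 - t)) ^ min i k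

theorem deCasteljauRow_succ_of_lt {k i : ℕ} (h : i < k + 1) (t : R) :
    deCasteljauRow (k + 1) i t = deCasteljauRow k i t := by
  rw [deCasteljauRow, deCasteljauRow, min_eq_left (by omega), min_eq_left (by omega)]

theorem deCasteljauRow_succ_succ {k i : ℕ} (h : k ≤ i) (t : R) :
    deCasteljauRow (k + 1) (i + 1) t =
      C t * deCasteljauRow k (i + 1) t + C (1 - t) * deCasteljauRow k i t := by
  simp only [deCasteljauRow]
  rw [min_eq_right (by omega : k + 1 ≤ i + 1), min_eq_right (by omega : k ≤ i + 1),
    min_eq_right h, Nat.add_sub_add_right, Nat.sub_add_comm h]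
  ring

end deCasteljau

noncomputable def deCasteljauMat (n k : ℕ) (t : ℝ) : Matrix (Fin (n + 1)) (Fin (n + 1)) ℝ :=
  Matrix.of fun i j => (deCasteljauRow k i t).coeff j

theorem deCasteljauMat_zero (n : ℕ) (t : ℝ) : deCasteljauMat n 0 t = 1 := by
  ext i j
  rw [deCasteljauMat, Matrix.of_apply, deCasteljauRow, Nat.min_zero, pow_zero, mul_one,
    Nat.sub_zero, coeff_X_pow, Matrix.one_apply]
  simp only [Fin.ext_iff, eq_comm]

theorem deCasteljauMat_self (n : ℕ) (t : ℝ) : deCasteljauMat n n t = bernsteinMat n t := by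
  ext i j
  rw [deCasteljauMat, bernsteinMat, Matrix.of_apply, Matrix.of_apply, deCasteljauRow,
    min_eq_left (by omega), Nat.sub_self, pow_zero, one_mul, coeff_C_mul_X_add_C_pow]
  split_ifs with hji
  · ring
  · rw [Nat.choose_eq_zero_of_lt (by omega), Nat.cast_zero, zero_mul, zero_mul]

theorem Gmat_mul_apply_of_lt {n k : ℕ} (t : ℝ) (M : Matrix (Fin (n + 1)) (Fin (n + 1)) ℝ)
    {i : Fin (n + 1)} (hi : (i : ℕ) < k) (j : Fin (n + 1)) :
    (Gmat n k t * M) i j = M i j := by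
  rw [Matrix.mul_apply, Finset.sum_eq_single i]
  · simp [Gmat, hi]
  · intro b _ hb
    simp [Gmat, hi, Fin.val_ne_of_ne (Ne.symm hb)]
  · simp

theorem Gmat_mul_apply_succ {n k : ℕ} (t : ℝ) (M : Matrix (Fin (n + 1)) (Fin (n + 1)) ℝ)
    {i : Fin n} (hi : k ≤ (i : ℕ) + 1) (j : Fin (n + 1)) :
    (Gmat n k t * M) i.succ j = t * M i.succ j + (1 - t) * M i.castSucc j := by
  rw [Matrix.mul_apply, Finset.sum_eq_add_of_mem i.succ i.castSucc (Finset.mem_univ _)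
    (Finset.mem_univ _) (show i.castSucc < i.succ from Fin.castSucc_lt_succ).ne']
  · have hik : ¬ (i : ℕ) + 1 < k := by omega
    simp [Gmat, hik]
  · rintro b - ⟨hb, hb'⟩
    rw [Ne, Fin.ext_iff, Fin.val_succ] at hb
    rw [Ne, Fin.ext_iff, Fin.val_castSucc] at hb'
    have hik : ¬ (i : ℕ) + 1 < k := by omega
    simp [Gmat, hik, hb, hb']

theorem Gmat_mul_deCasteljauMat (n k : ℕ) (t : ℝ) :
    Gmat n (k + 1) t * deCasteljauMat n k t = deCasteljauMat n (k + 1) t := by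
  ext i j
  by_cases hi : (i : ℕ) < k + 1
  · simp only [Gmat_mul_apply_of_lt t _ hi, deCasteljauMat, Matrix.of_apply,
      deCasteljauRow_succ_of_lt hi]
  · have hi0 : i ≠ 0 := by rintro rfl; simp at hi
    obtain ⟨i, rfl⟩ := Fin.exists_succ_eq_of_ne_zero hi0
    rw [Fin.val_succ] at hi
    rw [Gmat_mul_apply_succ t _ (by omega)]
    simp only [deCasteljauMat, Matrix.of_apply, Fin.val_succ, Fin.val_castSucc,
      deCasteljauRow_succ_succ (by omega : k ≤ (i : ℕ)), coeff_add, coeff_C_mul]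

theorem prod_Gmat_eq_deCasteljauMat (n k : ℕ) (t : ℝ) :
    ((List.range k).map fun ℓ => Gmat n (k - ℓ) t).prod = deCasteljauMat n k t := by
  induction k with
  | zero => simp [deCasteljauMat_zero]
  | succ k ih =>
    rw [List.range_succ_eq_map, List.map_cons, List.prod_cons, List.map_map, Nat.sub_zero]
    simp only [Function.comp_def, Nat.succ_eq_add_one, Nat.add_sub_add_right]
    rw [ih, Gmat_mul_deCasteljauMat]

theorem bernstein_G_factorization_general (n : ℕ) (t : ℝ) :
    bernsteinMat n t = (((List.range n).map fun ℓ => Gmat n (n - ℓ) t)).prod := by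
  rw [prod_Gmat_eq_deCasteljauMat, deCasteljauMat_self]

/-- De Casteljau factorization: `𝓑_n^{(t)} = G_n^{(t)} G_{n-1}^{(t)} ⋯ G_1^{(t)}`. -/
theorem bernstein_G_factorization (n : ℕ) (hn : 1 ≤ n) (t : ℝ) (ht0 : 0 ≤ t) (ht1 : t ≤ 1) :
    bernsteinMat n t = (((List.range n).map fun ℓ => Gmat n (n - ℓ) t)).prod :=
  bernstein_G_factorization_general n t
end

section
/- Fix t ∈ [0, 1]. For s ≥ 1, let 𝒬_s^{(t)} ∈ ℝ^{s×s} be the matrix with entries binom(i, j) t^j (1−t)^{i−j} for j ≤ i and 0 otherwise (so 𝒬_s^{(t)} = 𝓑_{s-1}^{(t)}). For m < s, let C_{s,m}^{(t)} ∈ ℝ^{(s-m)×s} be the banded matrix with (C_{s,m}^{(t)})_{ij} = binom(m, j−i) t^{j-i} (1−t)^{m-(j-i)} if 0 ≤ j − i ≤ m and 0 otherwise. Then for every s ≥ 2 and 1 ≤ m < s, 𝒬_s^{(t)} = A₂ A₁, where A₂ = diag(I_m, 𝒬_{s-m}^{(t)}) and A₁ ∈ ℝ^{s×s} has 𝒬_m^{(t)}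 in its top-left m × m block, zeros in the remaining entries of its top m rows, and C_{s,m}^{(t)} as its bottom s − m rows. -/
/-- Entry `(i, j)` of the Bernstein matrix `𝒬^{(t)}`: `C(i, j) t^j (1-t)^{i-j}` if `j ≤ i`,
else `0`. -/
def QBent (t : ℝ) (i j : ℕ) : ℝ :=
  if j ≤ i then (i.choose j : ℝ) * t ^ j * (1 - t) ^ (i - j) else 0

/-- The matrix `𝒬_s^{(t)} ∈ ℝ^{s×s}` with entries `C(i, j) t^j (1-t)^{i-j}` for `j ≤ i` and
`0` otherwise (so `𝒬_s^{(t)} = 𝓑_{s-1}^{(t)}`). -/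
def QBmat (s : ℕ) (t : ℝ) : Matrix (Fin s) (Fin s) ℝ :=
  Matrix.of fun i j => QBent t (i : ℕ) (j : ℕ)

/-- Entry `(i, j)` of the banded matrix `C_{·,m}^{(t)}`:
`C(m, j-i) t^{j-i} (1-t)^{m-(j-i)}` if `0 ≤ j - i ≤ m`, else `0`. -/
def CBent (t : ℝ) (m i j : ℕ) : ℝ :=
  if i ≤ j ∧ j ≤ i + m then
    (m.choose (j - i) : ℝ) * t ^ (j - i) * (1 - t) ^ (m - (j - i))
  else 0

/-- The block-diagonal matrix `A₂ = diag(I_m, 𝒬_{s-m}^{(t)}) ∈ ℝ^{s×s}`. -/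
def A2Bmat (s m : ℕ) (t : ℝ) : Matrix (Fin s) (Fin s) ℝ :=
  Matrix.of fun a b =>
    if (a : ℕ) < m ∨ (b : ℕ) < m then (if a = b then 1 else 0)
    else QBent t ((a : ℕ) - m) ((b : ℕ) - m)

/-- The matrix `A₁ ∈ ℝ^{s×s}` with `𝒬_m^{(t)}` in its top-left `m × m` block, zeros in the
remaining entries of its top `m` rows, and `C_{s,m}^{(t)}` as its bottom `s - m` rows. -/
def A1Bmat (s m : ℕ) (t : ℝ) : Matrix (Fin s) (Fin s) ℝ :=
  Matrix.of fun a b =>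
    if (a : ℕ) < m then QBent t (a : ℕ) (b : ℕ)
    else CBent t m ((a : ℕ) - m) (b : ℕ)

/-- Key convolution identity: `∑_k QBent i k · CBent m k j = QBent (i+m) j`. -/
lemma QBent_CBent_key (t : ℝ) (i m j N : ℕ) (hN : i < N) :
    ∑ k ∈ Finset.range N, QBent t i k * CBent t m k j = QBent t (i + m) j := by
  by_cases hj : j ≤ i + m
  · have h1 : ∀ k ∈ Finset.range (j + 1),
        QBent t i k * CBent t m k j
          = ((i.choose k * m.choose (j - k) : ℕ) : ℝ) * (t ^ j * (1 - t) ^ (i + m - j)) := by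
      intro k hk
      simp only [Finset.mem_range, Nat.lt_succ_iff] at hk
      unfold QBent CBent
      by_cases hki : k ≤ i
      · by_cases hjm : j ≤ k + m
        · rw [if_pos hki, if_pos ⟨hk, hjm⟩]
          have e1 : t ^ j = t ^ k * t ^ (j - k) := by
            rw [← pow_add]; congr 1; omega
          have e2 : (1 - t) ^ (i + m - j) = (1 - t) ^ (i - k) * (1 - t) ^ (m - (j - k)) := by
            rw [← pow_add]; congr 1; omega
          rw [e1, e2]; push_cast; ring
        · rw [if_pos hki, if_neg (show ¬(k ≤ j ∧ j ≤ k + m) by omega), mul_zero,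
            Nat.choose_eq_zero_of_lt (show m < j - k by omega)]
          simp
      · rw [if_neg hki, zero_mul, Nat.choose_eq_zero_of_lt (show i < k by omega)]
        simp
    set L := max N (j + 1) with hL
    have hA : ∑ k ∈ Finset.range N, QBent t i k * CBent t m k j
        = ∑ k ∈ Finset.range L, QBent t i k * CBent t m k j := by
      apply Finset.sum_subset (Finset.range_subset_range.2 (le_max_left _ _))
      intro k _ hk
      simp only [Finset.mem_range, not_lt] at hk
      have : ¬ k ≤ i := by omega
      rw [QBent, if_neg this, zero_mul]
    have hB : ∑ k ∈ Finset.range L, QBent t i k * CBent t m k j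
        = ∑ k ∈ Finset.range (j + 1), QBent t i k * CBent t m k j := by
      symm
      apply Finset.sum_subset (Finset.range_subset_range.2 (le_max_right _ _))
      intro k _ hk
      simp only [Finset.mem_range, Nat.lt_succ_iff] at hk
      have : ¬ (k ≤ j ∧ j ≤ k + m) := by omega
      rw [CBent, if_neg this, mul_zero]
    rw [hA, hB, Finset.sum_congr rfl h1, ← Finset.sum_mul, QBent, if_pos hj]
    have hv : ∑ k ∈ Finset.range (j + 1), (i.choose k * m.choose (j - k) : ℕ)
        = (i + m).choose j := by
      rw [Nat.add_choose_eq, Finset.Nat.sum_antidiagonal_eq_sum_range_succ_mk]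
    rw [← Nat.cast_sum, hv]
    ring
  · rw [QBent, if_neg hj]
    apply Finset.sum_eq_zero
    intro k _
    unfold QBent CBent
    split_ifs with h1 h2
    · omega
    · rw [mul_zero]
    · rw [zero_mul]
    · rw [zero_mul]

/-- Two-way factorization of the Bernstein matrix: `𝒬_s^{(t)} = A₂ A₁`. -/
theorem bernstein_two_way_factorization (s m : ℕ) (hs : 2 ≤ s) (hm : 1 ≤ m) (hms : m < s)
    (t : ℝ) (ht0 : 0 ≤ t) (ht1 : t ≤ 1) :
    QBmat s t = A2Bmat s m t * A1Bmat s m t := by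
  ext i j
  rw [Matrix.mul_apply]
  simp only [QBmat, A2Bmat, A1Bmat, Matrix.of_apply]
  by_cases hi : (i : ℕ) < m
  · rw [Finset.sum_eq_single i]
    · rw [if_pos (Or.inl hi), if_pos rfl, if_pos hi, one_mul]
    · intro k _ hk
      rw [if_pos (Or.inl hi), if_neg (fun h => hk h.symm), zero_mul]
    · intro h
      exact absurd (Finset.mem_univ i) h
  · have hcongr : ∀ k : Fin s,
        (if (i : ℕ) < m ∨ (k : ℕ) < m then (if i = k then (1:ℝ) else 0)
          else QBent t ((i : ℕ) - m) ((k : ℕ) - m)) *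
        (if (k : ℕ) < m then QBent t (k : ℕ) (j : ℕ) else CBent t m ((k : ℕ) - m) (j : ℕ))
        = (fun n : ℕ =>
            (if (i : ℕ) < m ∨ n < m then (if (i : ℕ) = n then (1:ℝ) else 0)
              else QBent t ((i : ℕ) - m) (n - m)) *
            (if n < m then QBent t n (j : ℕ) else CBent t m (n - m) (j : ℕ))) (k : ℕ) := by
      intro k
      simp only [Fin.ext_iff]
    symm
    calc ∑ k : Fin s,
          (if (i : ℕ) < m ∨ (k : ℕ) < m then (if i = k then (1:ℝ) else 0)
            else QBent t ((i : ℕ) - m) ((k : ℕ) - m)) *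
          (if (k : ℕ) < m then QBent t (k : ℕ) (j : ℕ) else CBent t m ((k : ℕ) - m) (j : ℕ))
        = ∑ n ∈ Finset.range s,
            (if (i : ℕ) < m ∨ n < m then (if (i : ℕ) = n then (1:ℝ) else 0)
              else QBent t ((i : ℕ) - m) (n - m)) *
            (if n < m then QBent t n (j : ℕ) else CBent t m (n - m) (j : ℕ)) := by
          rw [Finset.sum_congr rfl (fun k _ => hcongr k)]
          exact Fin.sum_univ_eq_sum_range (fun n : ℕ =>
            (if (i : ℕ) < m ∨ n < m then (if (i : ℕ) = n then (1:ℝ) else 0)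
              else QBent t ((i : ℕ) - m) (n - m)) *
            (if n < m then QBent t n (j : ℕ) else CBent t m (n - m) (j : ℕ))) s
      _ = ∑ n ∈ Finset.Ico m s,
            (if (i : ℕ) < m ∨ n < m then (if (i : ℕ) = n then (1:ℝ) else 0)
              else QBent t ((i : ℕ) - m) (n - m)) *
            (if n < m then QBent t n (j : ℕ) else CBent t m (n - m) (j : ℕ)) := by
          rw [Finset.range_eq_Ico, ← Finset.sum_Ico_consecutive _ (Nat.zero_le m) (le_of_lt hms)]
          convert zero_add _
          apply Finset.sum_eq_zero
          intro n hn
          simp only [Finset.mem_Ico] at hn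
          rw [if_pos (Or.inr hn.2), if_neg (by omega), zero_mul]
      _ = ∑ k ∈ Finset.range (s - m),
            QBent t ((i : ℕ) - m) k * CBent t m k (j : ℕ) := by
          rw [Finset.sum_Ico_eq_sum_range]
          apply Finset.sum_congr rfl
          intro k _
          rw [if_neg (by omega), if_neg (by omega)]
          congr 1 <;> · congr 1; omega
      _ = QBent t (i : ℕ) (j : ℕ) := by
          rw [QBent_CBent_key t _ _ _ _ (by omega)]
          congr 1
          omega
end
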